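/- Let n be a natural number with n ≥ 1, and let a, v be real numbers with v > 0 and |vⁿ − a| < vⁿ. Then a^{1/n} = ∑_{k=0}^∞ (−1)ᵏ · C(1/n, k) · v^{1−nk} · (vⁿ − a)ᵏ; equivalently, a^{1/n} = v − (vⁿ−a)/(n v^{n−1}) − (n−1)(vⁿ−a)²/(2n² v^{2n−1}) − (n−1)(2n−1)(vⁿ−a)³/(6n³ v^{3n−1}) − ⋯. -/

import Mathlib

/-!
Write `a = b (1 + x)` with `b = vⁿ` and `x = (a - vⁿ)/vⁿ`, so `|x| < 1`. Newton's binomial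
series `(1 + x)^r = ∑ C(r, k) xᵏ` gives `a^r = b^r ∑ C(r, k) xᵏ`; for `r = 1/n` we have
`b^r = v`, and the `k`-th term becomes `(-1)ᵏ C(1/n, k) v^{1-nk} (vⁿ - a)ᵏ`.
-/

/-- Generalized binomial coefficient `C(r, k) = (∏_{j=0}^{k-1} (r - j)) / k!`. -/
noncomputable def genBinom (r : ℝ) (k : ℕ) : ℝ :=
  (∏ j ∈ Finset.range k, (r - j)) / (Nat.factorial k : ℝ)

theorem genBinom_eq_ringChoose (r : ℝ) (k : ℕ) : genBinom r k = Ring.choose r k := by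
  rw [Ring.choose_eq_smul, genBinom, smul_eq_mul, div_eq_inv_mul,
    ← descPochhammer_eval_eq_prod_range, ← Polynomial.aeval_eq_smeval,
    ← descPochhammer_map (algebraMap ℤ ℝ), Polynomial.eval_map_algebraMap]

theorem hasSum_genBinom_mul_pow (r : ℝ) {x : ℝ} (hx : |x| < 1) :
    HasSum (fun k => genBinom r k * x ^ k) ((1 + x) ^ r) := by
  have hsum := (Real.one_add_rpow_hasFPowerSeriesOnBall_zero (a := r)).hasSum (y := x)
    (by simpa [← ofReal_norm] using hx)
  simpa [binomialSeries, FormalMultilinearSeries.ofScalars_apply_eq, genBinom_eq_ringChoose,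
    mul_comm] using hsum

theorem hasSum_rpow_of_abs_sub_lt (r : ℝ) {a b : ℝ} (h : |b - a| < b) :
    HasSum (fun k => b ^ r * (genBinom r k * ((a - b) / b) ^ k)) (a ^ r) := by
  have hb : 0 < b := (abs_nonneg _).trans_lt h
  have hx : |(a - b) / b| < 1 := by
    rwa [abs_div, abs_of_pos hb, div_lt_one hb, abs_sub_comm]
  have ha : a = b * (1 + (a - b) / b) := by field_simp; ring
  have hsum := (hasSum_genBinom_mul_pow r hx).mul_left (b ^ r)
  rwa [← Real.mul_rpow hb.le (by linarith [abs_lt.1 hx]), ← ha] at hsum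

theorem stmt_8 (n : ℕ) (hn : 1 ≤ n) (a v : ℝ) (hv : 0 < v) (h : |v ^ n - a| < v ^ n) :
    a ^ ((1 : ℝ) / n) =
      ∑' k : ℕ, (-1) ^ k * genBinom (1 / n) k * v ^ ((1 : ℤ) - n * k) * (v ^ n - a) ^ k := by
  have hroot : (v ^ n) ^ ((1 : ℝ) / n) = v := by
    rw [one_div, Real.pow_rpow_inv_natCast hv.le (by omega)]
  have hsum := hasSum_rpow_of_abs_sub_lt (1 / n) h
  rw [hroot] at hsum
  refine (HasSum.tsum_eq (hsum.congr_fun fun k => ?_)).symm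
  rw [zpow_sub₀ hv.ne', zpow_one, ← Nat.cast_mul, zpow_natCast, pow_mul, div_pow,
    ← neg_sub (v ^ n) a, neg_pow (v ^ n - a)]
  ring
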